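/- Generalized main theorem, no-arrows case: let w_0, …, w_q be vectors in ℂ^n, viewed as activation tensors of a (q+1)-node network with no arrows. Apply the blow/forget procedure to get order-(q+1) tensors B_0, …, B_q (B_j places w_j in position j, blows for j < q, and forgets all other positions). Then the BMP ∘(B_q, B_0, B_1, …, B_{q-1}) equals the rank-1 tensor w_0 ⊗ w_1 ⊗ ⋯ ⊗ w_q, i.e., its entry at (i_0,…,i_q) is (w_0)_{i_0}⋯(w_q)_{i_q}. -/

import Mathlib

/-!
Read cyclically, factor `k` of the product is `B_{k-1}` with the summation index `h` in mode `k`.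
For `k ≠ 0` it is a blown tensor and contributes `(w_{k-1})_{i_{k-1}}` times the indicator of
`h = i_0`; for `k = 0` it is the forgotten tensor `B_q` and contributes `(w_q)_{i_q}` whatever `h`
is. As `q > 0`, at least one indicator occurs, so only `h = i_0` survives the sum, and what remains
is `∏ₖ (w_{k-1})_{i_{k-1}} = ∏ⱼ (w_j)_{i_j}`.
-/

/-- The order-(q+1) tensor `B_j` produced by the blow/forget procedure from the
activation vector `w_j` of node `b_j` in a network with no arrows:
for `j < q`, `(B_j)_{i_0,…,i_q} = (w_j)_{i_j}·[i_{j+1} = i_0]` (blow and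
forgets); for `j = q`, `(B_q)_{i_0,…,i_q} = (w_q)_{i_q}`. -/
def procTensor {n q : ℕ} (w : Fin (q + 1) → Fin n → ℂ) (j : Fin (q + 1)) :
    (Fin (q + 1) → Fin n) → ℂ :=
  fun i => if (j : ℕ) < q then (if i (j + 1) = i 0 then w j (i j) else 0) else w j (i j)

theorem Fin.sub_one_ne_self {q : ℕ} (hq : 0 < q) (k : Fin (q + 1)) : k - 1 ≠ k := by
  rw [Ne, sub_eq_self]
  simp only [Fin.one_eq_zero_iff, Nat.add_eq_right]
  exact hq.ne'

theorem Fin.val_sub_one_lt_of_ne_zero {q : ℕ} {k : Fin (q + 1)} (hk : k ≠ 0) :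
    ((k - 1 : Fin (q + 1)) : ℕ) < q := by
  rw [Fin.coe_sub_one, if_neg hk]
  have : (k : ℕ) ≠ 0 := Fin.val_ne_zero_iff.mpr hk
  omega

section procTensor

variable {n q : ℕ} (w : Fin (q + 1) → Fin n → ℂ)

theorem procTensor_of_val_lt {j : Fin (q + 1)} (hj : (j : ℕ) < q) (i : Fin (q + 1) → Fin n) :
    procTensor w j i = if i (j + 1) = i 0 then w j (i j) else 0 :=
  if_pos hj

theorem procTensor_last (i : Fin (q + 1) → Fin n) :
    procTensor w (Fin.last q) i = w (Fin.last q) (i (Fin.last q)) :=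
  if_neg (by simp)

theorem procTensor_sub_one_update (hq : 0 < q) (i : Fin (q + 1) → Fin n) (k : Fin (q + 1))
    (h : Fin n) :
    procTensor w (k - 1) (Function.update i k h) =
      if k ≠ 0 ∧ h ≠ i 0 then 0 else w (k - 1) (i (k - 1)) := by
  have hself : k - 1 ≠ k := Fin.sub_one_ne_self hq k
  by_cases hk : k = 0
  · subst hk
    have hlast : (0 : Fin (q + 1)) - 1 = Fin.last q := Fin.ext (by simp)
    rw [hlast, procTensor_last, Function.update_of_ne (hlast ▸ hself)]
    simp
  · rw [procTensor_of_val_lt w (Fin.val_sub_one_lt_of_ne_zero hk), sub_add_cancel,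
      Function.update_self, Function.update_of_ne (Ne.symm hk), Function.update_of_ne hself]
    by_cases hh : h = i 0 <;> simp [hk, hh]

end procTensor

/-- Main theorem, no-arrows case: the BMP `∘(B_q, B_0, B_1, …, B_{q-1})`
(the k-th factor of the product carries the summation index in its k-th mode)
of the tensors obtained from the activation vectors `w_0, …, w_q` by the
blow/forget procedure equals the rank-1 total tensor `w_0 ⊗ w_1 ⊗ ⋯ ⊗ w_q`. -/
theorem no_arrows_network_bmp {n q : ℕ} (hq : 0 < q) (w : Fin (q + 1) → Fin n → ℂ) :
    ∀ i : Fin (q + 1) → Fin n,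
      (∑ h : Fin n, ∏ k : Fin (q + 1), procTensor w (k - 1) (Function.update i k h))
        = ∏ j : Fin (q + 1), w j (i j) := by
  intro i
  have hone : (1 : Fin (q + 1)) ≠ 0 := by simpa using hq.ne'
  simp_rw [procTensor_sub_one_update w hq i]
  rw [Fintype.sum_eq_single (i 0)]
  · simp only [ne_eq, not_true_eq_false, and_false, if_false]
    exact (Equiv.subRight (1 : Fin (q + 1))).prod_comp fun j => w j (i j)
  · intro h hh
    exact Finset.prod_eq_zero (Finset.mem_univ 1) (if_pos ⟨hone, hh⟩)
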